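/- arXiv:1010.5842 — 3 statements merged into one kernel-verified Lean document; each statement's English description precedes it below -/
import Mathlib

section
/- The elements T = (S₁+S₂)/√2 and V = UTU, where U = S₁S₁* − S₂S₂*, are isometries satisfying TT* + VV* = 1, and both are fixed by any *-automorphism σ with σ(S₁)=S₂, σ(S₂)=S₁. -/
/-!
Write `U = S₁S₁* − S₂S₂*`. The Cuntz relation forces `S₁*S₂ = 0`, so `U` is a self-adjoint
unitary with `US₁ = S₁` and `US₂ = −S₂`. Hence `S₁ + S₂` has `(S₁ + S₂)*(S₁ + S₂) = 2`, and
conjugating by `U` preserves isometries while `V V* = (UT)(UT)*` with `UT = (S₁ − S₂)/√2`;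
the parallelogram identity `(S₁+S₂)(S₁+S₂)* + (S₁−S₂)(S₁−S₂)* = 2(S₁S₁* + S₂S₂*) = 2` gives
`TT* + VV* = 1`. Finally `σ` fixes `S₁ + S₂` and sends `U` to `−U`, and the two signs cancel in
`V = UTU`.
-/

section

variable {R : Type*} [Ring R] [StarRing R]

structure IsCuntzPair (S₁ S₂ : R) : Prop where
  star_mul_self_left : star S₁ * S₁ = 1
  star_mul_self_right : star S₂ * S₂ = 1
  mul_star_add_mul_star : S₁ * star S₁ + S₂ * star S₂ = 1

def cuntzSymmetry (S₁ S₂ : R) : R :=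
  S₁ * star S₁ - S₂ * star S₂

theorem cuntzSymmetry_swap (S₁ S₂ : R) : cuntzSymmetry S₂ S₁ = -cuntzSymmetry S₁ S₂ :=
  (neg_sub _ _).symm

theorem isSelfAdjoint_cuntzSymmetry (S₁ S₂ : R) : IsSelfAdjoint (cuntzSymmetry S₁ S₂) := by
  simp only [IsSelfAdjoint, cuntzSymmetry, star_sub, star_mul, star_star]

theorem map_cuntzSymmetry {S F : Type*} [Ring S] [StarRing S] [FunLike F R S] [RingHomClass F R S]
    [StarHomClass F R S] (f : F) (S₁ S₂ : R) :
    f (cuntzSymmetry S₁ S₂) = cuntzSymmetry (f S₁) (f S₂) := by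
  simp only [cuntzSymmetry, map_sub, map_mul, map_star]

theorem conj_mul_star_conj {U : R} (hU : IsSelfAdjoint U) (hUU : U * U = 1) (x : R) :
    U * x * U * star (U * x * U) = U * x * star (U * x) := by
  simp only [star_mul, hU.star_eq, mul_assoc]
  rw [← mul_assoc U U, hUU, one_mul]

theorem star_conj_mul_conj {U : R} (hU : IsSelfAdjoint U) (hUU : U * U = 1) (x y : R) :
    star (U * x * U) * (U * y * U) = U * (star x * y) * U := by
  simp only [star_mul, hU.star_eq, mul_assoc]
  rw [← mul_assoc U U, hUU, one_mul]

namespace IsCuntzPair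

variable {S₁ S₂ : R}

theorem symm (h : IsCuntzPair S₁ S₂) : IsCuntzPair S₂ S₁ :=
  ⟨h.2, h.1, by rw [add_comm, h.3]⟩

/-- Sandwiching the Cuntz relation between `star S₁` and `S₂` doubles `star S₁ * S₂`. -/
theorem star_mul_eq_zero (h : IsCuntzPair S₁ S₂) : star S₁ * S₂ = 0 := by
  have double : star S₁ * S₂ + star S₁ * S₂ = star S₁ * S₂ :=
    calc star S₁ * S₂ + star S₁ * S₂
        = star S₁ * S₁ * (star S₁ * S₂) + star S₁ * S₂ * (star S₂ * S₂) := by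
          rw [h.star_mul_self_left, h.star_mul_self_right, one_mul, mul_one]
      _ = star S₁ * (S₁ * star S₁ + S₂ * star S₂) * S₂ := by noncomm_ring
      _ = star S₁ * S₂ := by rw [h.mul_star_add_mul_star, mul_one]
  exact add_eq_right.mp double

theorem star_mul_eq_zero' (h : IsCuntzPair S₁ S₂) : star S₂ * S₁ = 0 :=
  h.symm.star_mul_eq_zero

theorem cuntzSymmetry_mul_left (h : IsCuntzPair S₁ S₂) : cuntzSymmetry S₁ S₂ * S₁ = S₁ := by
  rw [cuntzSymmetry, sub_mul, mul_assoc, h.star_mul_self_left, mul_assoc, h.star_mul_eq_zero',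
    mul_one, mul_zero, sub_zero]

theorem cuntzSymmetry_mul_right (h : IsCuntzPair S₁ S₂) : cuntzSymmetry S₁ S₂ * S₂ = -S₂ := by
  rw [← neg_neg (cuntzSymmetry S₁ S₂), ← cuntzSymmetry_swap, neg_mul, h.symm.cuntzSymmetry_mul_left]

theorem cuntzSymmetry_mul_self (h : IsCuntzPair S₁ S₂) :
    cuntzSymmetry S₁ S₂ * cuntzSymmetry S₁ S₂ = 1 := by
  nth_rewrite 2 [cuntzSymmetry]
  rw [mul_sub, ← mul_assoc, ← mul_assoc, h.cuntzSymmetry_mul_left, h.cuntzSymmetry_mul_right,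
    neg_mul, sub_neg_eq_add, h.mul_star_add_mul_star]

theorem star_add_mul_add (h : IsCuntzPair S₁ S₂) : star (S₁ + S₂) * (S₁ + S₂) = 2 := by
  simp only [star_add, add_mul, mul_add, h.star_mul_self_left, h.star_mul_self_right,
    h.star_mul_eq_zero, h.star_mul_eq_zero']
  norm_num [one_add_one_eq_two]

theorem add_mul_star_add_add_sub_mul_star_sub (h : IsCuntzPair S₁ S₂) :
    (S₁ + S₂) * star (S₁ + S₂) + (S₁ - S₂) * star (S₁ - S₂) = 2 := by
  rw [star_add, star_sub, ← one_add_one_eq_two, ← h.mul_star_add_mul_star]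
  noncomm_ring

theorem cuntzSymmetry_mul_add (h : IsCuntzPair S₁ S₂) :
    cuntzSymmetry S₁ S₂ * (S₁ + S₂) = S₁ - S₂ := by
  rw [mul_add, h.cuntzSymmetry_mul_left, h.cuntzSymmetry_mul_right, sub_eq_add_neg]

variable {𝕜 : Type*} [CommRing 𝕜] [StarRing 𝕜] [Algebra 𝕜 R] [StarModule 𝕜 R]

theorem smul_add_cuntzSymmetry_conj {c : 𝕜} (h : IsCuntzPair S₁ S₂) (hc : 2 * (star c * c) = 1) :
    IsCuntzPair (c • (S₁ + S₂))
      (cuntzSymmetry S₁ S₂ * (c • (S₁ + S₂)) * cuntzSymmetry S₁ S₂) := by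
  have hU := isSelfAdjoint_cuntzSymmetry S₁ S₂
  have hUU := h.cuntzSymmetry_mul_self
  have half_smul_two : (star c * c) • (2 : R) = 1 := by
    rw [Algebra.smul_def, ← map_ofNat (algebraMap 𝕜 R) 2, ← map_mul, mul_comm, hc, map_one]
  have hTT : star (c • (S₁ + S₂)) * (c • (S₁ + S₂)) = 1 := by
    rw [star_smul, smul_mul_smul_comm, h.star_add_mul_add, half_smul_two]
  refine ⟨hTT, by rw [star_conj_mul_conj hU hUU, hTT, mul_one, hUU], ?_⟩
  rw [conj_mul_star_conj hU hUU, mul_smul_comm, h.cuntzSymmetry_mul_add, star_smul, star_smul,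
    smul_mul_smul_comm, smul_mul_smul_comm, ← smul_add, mul_comm c,
    h.add_mul_star_add_add_sub_mul_star_sub, half_smul_two]

end IsCuntzPair
end

theorem stmt_6_general {A : Type*} [NormedRing A] [StarRing A]
    [NormedAlgebra ℂ A] [StarModule ℂ A]
    (S₁ S₂ : A) (h1 : star S₁ * S₁ = 1) (h2 : star S₂ * S₂ = 1)
    (hC : S₁ * star S₁ + S₂ * star S₂ = 1)
    (U T V : A)
    (hU : U = S₁ * star S₁ - S₂ * star S₂)
    (hT : T = ((Real.sqrt 2 : ℂ))⁻¹ • (S₁ + S₂))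
    (hV : V = U * T * U) :
    star T * T = 1 ∧ star V * V = 1 ∧ T * star T + V * star V = 1 ∧
    ∀ σ : A ≃⋆ₐ[ℂ] A, σ S₁ = S₂ → σ S₂ = S₁ → σ T = T ∧ σ V = V := by
  obtain rfl : U = cuntzSymmetry S₁ S₂ := hU
  have hc : 2 * (star (Real.sqrt 2 : ℂ)⁻¹ * (Real.sqrt 2 : ℂ)⁻¹) = 1 := by
    rw [← Complex.ofReal_inv, Complex.star_def, Complex.conj_ofReal, ← Complex.ofReal_mul,
      ← mul_inv, Real.mul_self_sqrt zero_le_two]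
    norm_num
  obtain ⟨hTT, hVV, hsum⟩ := (IsCuntzPair.mk h1 h2 hC).smul_add_cuntzSymmetry_conj hc
  subst hT hV
  refine ⟨hTT, hVV, hsum, fun σ hσ₁ hσ₂ => ?_⟩
  have hσT : σ ((Real.sqrt 2 : ℂ)⁻¹ • (S₁ + S₂)) = (Real.sqrt 2 : ℂ)⁻¹ • (S₁ + S₂) := by
    rw [map_smul, map_add, hσ₁, hσ₂, add_comm]
  refine ⟨hσT, ?_⟩
  rw [map_mul, map_mul, hσT, map_cuntzSymmetry, hσ₁, hσ₂, cuntzSymmetry_swap, neg_mul,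
    mul_neg, neg_mul, neg_neg]

theorem stmt_6 {A : Type*} [NormedRing A] [StarRing A] [CStarRing A]
    [NormedAlgebra ℂ A] [CompleteSpace A] [StarModule ℂ A]
    (S₁ S₂ : A) (h1 : star S₁ * S₁ = 1) (h2 : star S₂ * S₂ = 1)
    (hC : S₁ * star S₁ + S₂ * star S₂ = 1)
    (U T V : A)
    (hU : U = S₁ * star S₁ - S₂ * star S₂)
    (hT : T = ((Real.sqrt 2 : ℂ))⁻¹ • (S₁ + S₂))
    (hV : V = U * T * U) :
    star T * T = 1 ∧ star V * V = 1 ∧ T * star T + V * star V = 1 ∧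
    ∀ σ : A ≃⋆ₐ[ℂ] A, σ S₁ = S₂ → σ S₂ = S₁ → σ T = T ∧ σ V = V :=
  stmt_6_general S₁ S₂ h1 h2 hC U T V hU hT hV
end

section
/- If W is a unitary with W² = 1 and WS₁W = S₂, then S₁S₁*W + (S₁S₁*W)* = W; consequently W lies in the C*-subalgebra generated by S₁ and WS₁. -/
theorem stmt_7 {B : Type*} [NormedRing B] [StarRing B] [CStarRing B]
    [NormedAlgebra ℂ B] [CompleteSpace B] [StarModule ℂ B]
    (S₁ S₂ W : B) (h1 : star S₁ * S₁ = 1) (h2 : star S₂ * S₂ = 1)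
    (hC : S₁ * star S₁ + S₂ * star S₂ = 1)
    (hW : W ∈ unitary B) (hW2 : W ^ 2 = 1) (hWS : W * S₁ * W = S₂) :
    S₁ * star S₁ * W + star (S₁ * star S₁ * W) = W ∧
    W ∈ (StarAlgebra.adjoin ℂ {S₁, W * S₁}).topologicalClosure := by
  have hWW : W * W = 1 := by rw [← pow_two]; exact hW2
  have hsW : star W = W := by
    calc star W = star W * (W * W) := by rw [hWW, mul_one]
      _ = (star W * W) * W := by rw [mul_assoc]
      _ = W := by rw [hW.1, one_mul]
  have h3 : S₁ * W = W * S₂ := by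
    have := congrArg (fun x => W * x) hWS
    simpa [← mul_assoc, hWW, one_mul] using this
  have h4 : W * star S₁ = star S₂ * W := by
    have := congrArg star h3
    simpa [star_mul, hsW] using this
  have h5 : W * S₁ = S₂ * W := by
    have := congrArg (fun x => x * W) hWS
    simpa [mul_assoc, hWW, mul_one] using this
  have hstar : star (S₁ * star S₁ * W) = S₂ * star S₂ * W := by
    calc star (S₁ * star S₁ * W) = W * S₁ * star S₁ := by
          simp [star_mul, hsW, mul_assoc]
      _ = S₂ * (W * star S₁) := by rw [h5, mul_assoc]
      _ = S₂ * star S₂ * W := by rw [h4, mul_assoc]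
  have key : S₁ * star S₁ * W + star (S₁ * star S₁ * W) = W := by
    rw [hstar, ← add_mul, hC, one_mul]
  refine ⟨key, ?_⟩
  have hS1 : S₁ ∈ StarAlgebra.adjoin ℂ {S₁, W * S₁} :=
    StarAlgebra.subset_adjoin ℂ _ (by simp)
  have hWS1 : W * S₁ ∈ StarAlgebra.adjoin ℂ {S₁, W * S₁} :=
    StarAlgebra.subset_adjoin ℂ _ (by simp)
  have hmul : S₁ * star (W * S₁) ∈ StarAlgebra.adjoin ℂ {S₁, W * S₁} :=
    mul_mem hS1 (star_mem hWS1)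
  have heq : S₁ * star (W * S₁) = S₁ * star S₁ * W := by
    simp [star_mul, hsW, mul_assoc]
  rw [heq] at hmul
  have hsum := add_mem hmul (star_mem hmul)
  rw [key] at hsum
  exact StarSubalgebra.le_topologicalClosure _ hsum
end

section
/- Suppose σ is an order-two automorphism of a simple unital C*-algebra A with σ(S₁) = S₂ and σ(S₂) = S₁ where S₁, S₂ satisfy the Cuntz relation, and suppose B = A ⊕ Aw is a C*-algebra containing A with w a unitary, w² = 1, wS₁ = S₂w, and waw = σ(a) for a ∈ A. If u ∈ B is a unitary with u² = 1 and uS₁ = S₂u, and if no unitary v ∈ A satisfies vS₁v* = S₂, then u = w or u = −w. -/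
set_option maxHeartbeats 1000000 in
theorem stmt_18 {A B : Type*}
    [NormedRing A] [StarRing A] [CStarRing A] [NormedAlgebra ℂ A]
    [CompleteSpace A] [StarModule ℂ A]
    [NormedRing B] [StarRing B] [CStarRing B] [NormedAlgebra ℂ B]
    [CompleteSpace B] [StarModule ℂ B]
    (ι : A →⋆ₐ[ℂ] B) (hι : Function.Injective ι)
    (S₁ S₂ : A) (h1 : star S₁ * S₁ = 1) (h2 : star S₂ * S₂ = 1)
    (hC : S₁ * star S₁ + S₂ * star S₂ = 1)
    (hgen : (StarAlgebra.adjoin ℂ {S₁, S₂}).topologicalClosure = ⊤)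
    (hsimple : ∀ I : TwoSidedIdeal A, IsClosed (I : Set A) → I = ⊥ ∨ I = ⊤)
    (hcenter : ∀ a : A, (∀ x : A, a * x = x * a) → ∃ c : ℂ, a = algebraMap ℂ A c)
    (σ : A ≃⋆ₐ[ℂ] A) (hord : ∀ a, σ (σ a) = a)
    (hσ1 : σ S₁ = S₂) (hσ2 : σ S₂ = S₁)
    (w : B) (hw : w ∈ unitary B) (hw2 : w ^ 2 = 1)
    (hws : w * ι S₁ = ι S₂ * w)
    (himp : ∀ a : A, w * ι a * w = ι (σ a))
    (hdecomp : ∀ b : B, ∃! p : A × A, b = ι p.1 + ι p.2 * w)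
    (hnov : ¬ ∃ v : A, v ∈ unitary A ∧ v * S₁ * star v = S₂)
    (u : B) (hu : u ∈ unitary B) (hu2 : u ^ 2 = 1)
    (hus : u * ι S₁ = ι S₂ * u) :
    u = w ∨ u = -w := by
  -- A is nontrivial
  haveI hntA : Nontrivial A := by
    by_contra h
    rw [not_nontrivial_iff_subsingleton] at h
    exact hnov ⟨1, ⟨by simp, by simp⟩, Subsingleton.elim _ _⟩
  have hww : w * w = 1 := by rw [← pow_two]; exact hw2
  have huu : u * u = 1 := by rw [← pow_two]; exact hu2
  have hwsa : star w = w := by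
    calc star w = star w * (w * w) := by rw [hww, mul_one]
      _ = (star w * w) * w := by rw [mul_assoc]
      _ = w := by rw [hw.1, one_mul]
  have husa : star u = u := by
    calc star u = star u * (u * u) := by rw [huu, mul_one]
      _ = (star u * u) * u := by rw [mul_assoc]
      _ = u := by rw [hu.1, one_mul]
  have hws' : ∀ x : A, w * ι x = ι (σ x) * w := by
    intro x
    calc w * ι x = (w * ι x * w) * w := by rw [mul_assoc, hww, mul_one]
      _ = ι (σ x) * w := by rw [himp x]
  -- uniqueness of decomposition
  have huniq : ∀ p₁ q₁ p₂ q₂ : A,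
      ι p₁ + ι q₁ * w = ι p₂ + ι q₂ * w → p₁ = p₂ ∧ q₁ = q₂ := by
    intro p₁ q₁ p₂ q₂ h
    obtain ⟨r, -, hr⟩ := hdecomp (ι p₂ + ι q₂ * w)
    have e1 : (p₁, q₁) = r := hr (p₁, q₁) h.symm
    have e2 : (p₂, q₂) = r := hr (p₂, q₂) rfl
    have := e1.trans e2.symm
    exact ⟨congrArg Prod.fst this, congrArg Prod.snd this⟩
  obtain ⟨⟨a, b⟩, hab, -⟩ := hdecomp u
  simp only at hab
  -- extraction from u S₁ = S₂ u
  have e1 : u * ι S₁ = ι (a * S₁) + ι (b * S₂) * w := by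
    rw [hab, add_mul, mul_assoc (ι b) w (ι S₁), hws' S₁, hσ1,
      ← mul_assoc (ι b), ← map_mul, ← map_mul]
  have e2 : ι S₂ * u = ι (S₂ * a) + ι (S₂ * b) * w := by
    rw [hab, mul_add, ← map_mul, ← mul_assoc (ι S₂) (ι b) w, ← map_mul]
  obtain ⟨ha1, hb1⟩ := huniq _ _ _ _ ((e1.symm.trans hus).trans e2)
  -- extraction from star u = u
  have e3 : star u = ι (star a) + ι (σ (star b)) * w := by
    rw [hab, star_add, star_mul (ι b) w, hwsa]
    simp only [← map_star]
    rw [hws']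
  obtain ⟨ha2, hb2⟩ := huniq _ _ _ _ (e3.symm.trans (husa.trans hab))
  -- extraction from u * u = 1
  have e4 : u * u = ι (a * a + b * σ b) + ι (a * b + b * σ a) * w := by
    rw [hab]
    have t1 : w * (ι b * w) = ι (σ b) := by
      rw [← mul_assoc, hws' b, mul_assoc, hww, mul_one]
    calc (ι a + ι b * w) * (ι a + ι b * w)
        = ι a * ι a + ι b * (w * (ι b * w)) + (ι a * (ι b * w) + ι b * (w * ι a)) := by
          simp only [mul_add, add_mul, mul_assoc]; abel
      _ = ι (a * a + b * σ b) + ι (a * b + b * σ a) * w := by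
          rw [t1, hws' a, ← mul_assoc (ι b), ← map_mul, ← map_mul, ← map_mul,
            ← mul_assoc (ι a), ← map_mul, ← add_mul, ← map_add, ← map_add]
  have e5 : (1 : B) = ι 1 + ι 0 * w := by simp
  obtain ⟨hs1, -⟩ := huniq _ _ _ _ ((e4.symm.trans huu).trans e5)
  -- z = u * w and w * u
  have hzd : u * w = ι b + ι a * w := by
    rw [hab, add_mul, mul_assoc (ι b) w w, hww, mul_one, add_comm]
  have hz'd : w * u = ι (σ b) + ι (σ a) * w := by
    rw [hab, mul_add, hws' a, ← mul_assoc w (ι b) w, hws' b,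
      mul_assoc (ι (σ b)) w w, hww, mul_one, add_comm]
  have hzz' : (u * w) * (w * u) = 1 := by
    rw [mul_assoc u w (w * u), ← mul_assoc w w u, hww, one_mul, huu]
  have hz'z : (w * u) * (u * w) = 1 := by
    rw [mul_assoc w u (u * w), ← mul_assoc u u w, huu, one_mul, hww]
  have hstz : star (u * w) = w * u := by rw [star_mul, hwsa, husa]
  -- the inverse trick
  have hcommz : ∀ y : B, (w * u) * y = y * (w * u) → (u * w) * y = y * (u * w) := by
    intro y hy
    calc (u * w) * y = ((u * w) * y) * ((w * u) * (u * w)) := by rw [hz'z, mul_one]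
      _ = (u * w) * (((w * u) * y) * (u * w)) := by rw [hy]; simp only [mul_assoc]
      _ = ((u * w) * (w * u)) * (y * (u * w)) := by simp only [mul_assoc]
      _ = y * (u * w) := by rw [hzz', one_mul]
  have hzS2 : (u * w) * ι S₂ = ι S₂ * (u * w) := by
    have L : (u * w) * ι S₂ = ι (b * S₂) + ι (a * S₁) * w := by
      rw [hzd, add_mul, mul_assoc (ι a) w (ι S₂), hws' S₂, hσ2,
        ← mul_assoc (ι a), ← map_mul, ← map_mul]
    have R : ι S₂ * (u * w) = ι (S₂ * b) + ι (S₂ * a) * w := by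
      rw [hzd, mul_add, ← map_mul, ← mul_assoc (ι S₂) (ι a) w, ← map_mul]
    rw [L, R, hb1, ha1]
  have hσb : σ b * S₁ = S₁ * σ b := by
    have := congrArg σ hb1
    rwa [map_mul, map_mul, hσ2] at this
  have hσa : σ a * S₂ = S₁ * σ a := by
    have := congrArg σ ha1
    rwa [map_mul, map_mul, hσ1, hσ2] at this
  have hzS1 : (u * w) * ι S₁ = ι S₁ * (u * w) := by
    apply hcommz
    have L : (w * u) * ι S₁ = ι (σ b * S₁) + ι (σ a * S₂) * w := by
      rw [hz'd, add_mul, mul_assoc (ι (σ a)) w (ι S₁), hws' S₁, hσ1,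
        ← mul_assoc (ι (σ a)), ← map_mul, ← map_mul]
    have R : ι S₁ * (w * u) = ι (S₁ * σ b) + ι (S₁ * σ a) * w := by
      rw [hz'd, mul_add, ← map_mul, ← mul_assoc (ι S₁) (ι (σ a)) w, ← map_mul]
    rw [L, R, hσb, hσa]
  -- continuity of ι
  have hcont : Continuous (ι : A → B) := by
    letI : CStarAlgebra A := ⟨⟩
    letI : CStarAlgebra B := ⟨⟩
    exact AddMonoidHomClass.continuous_of_bound ι 1
      (fun x => by simpa using NonUnitalStarAlgHom.norm_apply_le ι x)
  -- u * w commutes with all of ι(A)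
  have hcomm : ∀ x : A, (u * w) * ι x = ι x * (u * w) := by
    have hset : IsClosed {x : A | (u * w) * ι x = ι x * (u * w)} := by
      have : IsClosed {x : A | (u * w) * ι x - ι x * (u * w) = 0} :=
        isClosed_eq (Continuous.sub (continuous_const.mul hcont) (hcont.mul continuous_const))
          continuous_const
      convert this using 2 with x
      simp [sub_eq_zero]
    have hsub : ((StarAlgebra.adjoin ℂ {S₁, S₂} : StarSubalgebra ℂ A) : Set A)
        ⊆ {x : A | (u * w) * ι x = ι x * (u * w)} := by
      intro y hy
      induction hy using StarAlgebra.adjoin_induction with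
      | mem x hx =>
        rcases hx with hx | hx
        · rw [hx]; exact hzS1
        · rw [Set.mem_singleton_iff] at hx; rw [hx]; exact hzS2
      | algebraMap r =>
        simp only [Set.mem_setOf_eq, AlgHomClass.commutes]
        rw [Algebra.commutes]
      | add x y hx hy ihx ihy =>
        simp only [Set.mem_setOf_eq, map_add, mul_add, add_mul] at *
        rw [ihx, ihy]
      | mul x y hx hy ihx ihy =>
        simp only [Set.mem_setOf_eq, map_mul] at *
        rw [← mul_assoc, ihx, mul_assoc, ihy, ← mul_assoc]
      | star x hx ih =>
        simp only [Set.mem_setOf_eq] at *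
        have := congrArg star ih
        simp only [star_mul, hwsa, husa, ← map_star] at this
        exact hcommz _ (by rw [← mul_assoc] at this ⊢; exact this.symm)
    intro x
    have hx : x ∈ (StarAlgebra.adjoin ℂ {S₁, S₂}).topologicalClosure := by
      rw [hgen]; trivial
    exact closure_minimal hsub hset hx
  -- consequences in A
  have hkey : ∀ x : A, b * x = x * b ∧ a * σ x = x * a := by
    intro x
    have L : (u * w) * ι x = ι (b * x) + ι (a * σ x) * w := by
      rw [hzd, add_mul, mul_assoc (ι a) w (ι x), hws' x,
        ← mul_assoc (ι a), ← map_mul, ← map_mul]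
    have R : ι x * (u * w) = ι (x * b) + ι (x * a) * w := by
      rw [hzd, mul_add, ← map_mul, ← mul_assoc (ι x) (ι a) w, ← map_mul]
    exact huniq _ _ _ _ ((L.symm.trans (hcomm x)).trans R)
  obtain ⟨c, hc⟩ := hcenter b (fun x => (hkey x).1)
  have haσ : ∀ x : A, a * σ x = x * a := fun x => (hkey x).2
  have haσ' : ∀ x : A, σ x * a = a * x := by
    intro x
    have := haσ (σ x)
    rw [hord] at this
    exact this.symm
  -- a * a is central
  obtain ⟨t, ht⟩ := hcenter (a * a) (by
    intro x
    calc a * a * x = a * (a * x) := by rw [mul_assoc]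
      _ = a * (σ x * a) := by rw [haσ' x]
      _ = (a * σ x) * a := by rw [mul_assoc]
      _ = (x * a) * a := by rw [haσ x]
      _ = x * (a * a) := by rw [mul_assoc])
  -- injectivity of algebraMap ℂ A
  have hinjA : Function.Injective (algebraMap ℂ A) := by
    intro c₁ c₂ h
    by_contra hne
    have h0 : algebraMap ℂ A (c₁ - c₂) = 0 := by rw [map_sub, h, sub_self]
    have hn := norm_algebraMap A (c₁ - c₂)
    rw [h0, norm_zero] at hn
    have h1' : ‖c₁ - c₂‖ ≠ 0 := by simpa [sub_eq_zero] using hne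
    have h2' : ‖(1 : A)‖ ≠ 0 := by simp [norm_eq_zero]
    exact (mul_ne_zero h1' h2') hn.symm
  -- a is selfadjoint; t is real and nonnegative
  have hsa : IsSelfAdjoint a := ha2
  have htr : (t.re : ℂ) = t ∧ 0 ≤ t.re := by
    letI : CStarAlgebra A := ⟨⟩
    have hmem : t ∈ spectrum ℂ (a ^ 2) := by
      rw [pow_two, ht, spectrum.scalar_eq]
      exact Set.mem_singleton t
    rw [spectrum.map_pow a 2] at hmem
    obtain ⟨r, hr, hrt⟩ := hmem
    have hre : r = (r.re : ℂ) := hsa.mem_spectrum_eq_re hr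
    have hts : t = ((r.re : ℝ) : ℂ) ^ 2 := by rw [← hrt, ← hre]
    constructor
    · rw [hts, ← Complex.ofReal_pow, Complex.ofReal_re]
    · rw [hts, ← Complex.ofReal_pow, Complex.ofReal_re]
      positivity
  -- a = 0
  have ha0 : a = 0 := by
    rcases eq_or_lt_of_le htr.2 with hts | hts
    · -- t = 0, so a * a = 0, so a = 0
      have ht0 : t = 0 := by rw [← htr.1, ← hts]; simp
      have haa : a * a = 0 := by rw [ht, ht0, map_zero]
      have hn : ‖a‖ * ‖a‖ = 0 := by
        rw [← CStarRing.norm_star_mul_self, ha2, haa, norm_zero]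
      simpa [norm_eq_zero] using mul_self_eq_zero.mp hn
    · -- t > 0 : contradiction with hnov
      exfalso
      set s : ℝ := Real.sqrt t.re with hs
      have hspos : (0 : ℝ) < s := Real.sqrt_pos.mpr hts
      have hsne : ((s : ℂ)) ≠ 0 := by
        simpa using ne_of_gt hspos
      have hss : (s : ℂ) * (s : ℂ) = t := by
        rw [← Complex.ofReal_mul, Real.mul_self_sqrt htr.2]
        exact htr.1
      set v : A := ((s : ℂ))⁻¹ • a with hv
      have hvsa : star v = v := by
        rw [hv, star_smul, ha2, Complex.star_def, ← Complex.ofReal_inv, Complex.conj_ofReal,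
          Complex.ofReal_inv]
      have hvv : v * v = 1 := by
        rw [hv, smul_mul_smul_comm, ht, Algebra.algebraMap_eq_smul_one, smul_smul]
        rw [← mul_inv, hss]
        rw [inv_mul_cancel₀]
        · exact one_smul _ _
        · rw [← hss]; exact mul_ne_zero hsne hsne
      have hva : v * S₁ = S₂ * v := by
        have haS : a * S₁ = S₂ * a := by
          have := haσ S₂
          rwa [hσ2] at this
        rw [hv, smul_mul_assoc, haS, mul_smul_comm]
      apply hnov
      refine ⟨v, ⟨by rw [hvsa, hvv], by rw [hvsa, hvv]⟩, ?_⟩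
      rw [hva, hvsa, mul_assoc, hvv, mul_one]
  -- conclude
  have hbσ : b * σ b = 1 := by
    have := hs1
    rwa [ha0, mul_zero, zero_add] at this
  have hσc : σ b = b := by
    rw [hc]
    exact AlgHomClass.commutes σ c
  have hcc : c * c = 1 := by
    apply hinjA
    rw [map_mul, map_one, ← hc, ← hbσ, hσc]
  have hcases : c = 1 ∨ c = -1 := mul_self_eq_one_iff.mp hcc
  have hub : u = algebraMap ℂ B c * w := by
    rw [hab, ha0, map_zero, zero_add, hc, AlgHomClass.commutes]
  rcases hcases with h | h
  · left; rw [hub, h, map_one, one_mul]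
  · right; rw [hub, h, map_neg, map_one, neg_mul, one_mul]
end
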